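/- arXiv:2009.11958 — 3 statements merged into one kernel-verified Lean document; each statement's English description precedes it below -/
import Mathlib

section
/- Let A < 0, Q > 0, G ≥ 0 and let Ω solve Ω'(t) = 2AΩ(t) + Q − η(t)GΩ(t)² on [0,∞) for a measurable switching signal η : [0,∞) → {0,1}. If Ω(0) ∈ (Ω_ss, Ω̄_ss) with Ω_ss = Q/(−A + √(A² + QG)) and Ω̄_ss = −Q/(2A), then Ω(t) ∈ (Ω_ss, Ω̄_ss) for all t ≥ 0. -/
open Real Set

/-!
With `a = Ω_ss` and `b = Ω̄_ss` one has `2 A b + Q = 0` and `G a² = 2 A a + Q`. Whatever the mode,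
`Ω' ≤ 2 A (Ω - b)`, and while `a < Ω < b` also `Ω' ≥ (2 A - G (a + b)) (Ω - a)`. Hence both
`Ω - b` and `a - Ω` satisfy `g' ≤ K g` as long as they are negative; such a `g`, negative at time
`0`, tends to `0` at most exponentially fast and so never reaches it.
-/

theorem neg_of_hasDerivAt_le_mul_self {g g' : ℝ → ℝ} {K : ℝ}
    (hg : ∀ t, 0 ≤ t → HasDerivAt g (g' t) t) (h0 : g 0 < 0)
    (hg' : ∀ t, 0 ≤ t → g t < 0 → g' t ≤ K * g t) {t : ℝ} (ht : 0 ≤ t) : g t < 0 := by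
  -- the exponent `K - 1` makes the comparison on the boundary strict, as the fencing lemma needs
  set B : ℝ → ℝ := fun s => g 0 / 2 * exp ((K - 1) * s)
  have hB : ∀ s, HasDerivAt B (g 0 / 2 * (exp ((K - 1) * s) * (K - 1))) s := fun s =>
    (((hasDerivAt_id s).const_mul (K - 1)).exp.const_mul (g 0 / 2)).congr_deriv (by simp)
  have hBneg : ∀ s, B s < 0 := fun s => mul_neg_of_neg_of_pos (by linarith) (exp_pos _)
  have hle : g t ≤ B t := by
    refine image_le_of_deriv_right_lt_deriv_boundary
      (fun s hs => (hg s hs.1).continuousAt.continuousWithinAt)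
      (fun s hs => (hg s hs.1).hasDerivWithinAt) (by simp [B]; linarith) hB
      (fun s hs hgs => ?_) ⟨ht, le_rfl⟩
    calc g' s ≤ K * B s := hgs ▸ hg' s hs.1 (hgs ▸ hBneg s)
      _ < g 0 / 2 * (exp ((K - 1) * s) * (K - 1)) := by
        simp only [B]; nlinarith [exp_pos ((K - 1) * s)]
  exact hle.trans_lt (hBneg t)

section RiccatiField

variable {A Q G η x : ℝ}

theorem riccati_le_of_unobserved_steady_state {b : ℝ} (hb : 2 * A * b + Q = 0) (hG : 0 ≤ G)
    (hη : 0 ≤ η) : 2 * A * x + Q - η * G * x ^ 2 ≤ 2 * A * (x - b) := by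
  nlinarith [mul_nonneg (mul_nonneg hη hG) (sq_nonneg x)]

theorem riccati_ge_of_observed_steady_state {a b : ℝ} (ha : G * a ^ 2 = 2 * A * a + Q)
    (ha0 : 0 ≤ a) (hG : 0 ≤ G) (hη1 : η ≤ 1) (hax : a < x) (hxb : x < b) :
    (2 * A - G * (a + b)) * (x - a) ≤ 2 * A * x + Q - η * G * x ^ 2 := by
  have hdecomp : 2 * A * x + Q - η * G * x ^ 2
      = (2 * A - η * G * (x + a)) * (x - a) + (1 - η) * G * a ^ 2 := by
    linear_combination -ha
  have hslope : η * G * (x + a) ≤ G * (a + b) := by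
    calc η * G * (x + a) ≤ 1 * G * (x + a) := by gcongr; linarith
      _ ≤ G * (a + b) := by nlinarith
  rw [hdecomp]
  nlinarith [mul_nonneg (mul_nonneg (sub_nonneg.2 hη1) hG) (sq_nonneg a)]

theorem observed_steady_state_riccati_eq (hA : A < 0) (hG : 0 ≤ G) (hQ : 0 ≤ Q) :
    G * (Q / (-A + √(A ^ 2 + Q * G))) ^ 2 = 2 * A * (Q / (-A + √(A ^ 2 + Q * G))) + Q := by
  set s := √(A ^ 2 + Q * G)
  have hs : s ^ 2 = A ^ 2 + Q * G := sq_sqrt (by positivity)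
  have hd : -A + s ≠ 0 := by linarith [sqrt_nonneg (A ^ 2 + Q * G)]
  field_simp
  linear_combination -Q * hs

end RiccatiField

theorem switched_covariance_invariance_stable_general (A Q G : ℝ)
    (hA : A < 0) (hQ : 0 < Q) (hG : 0 ≤ G)
    (η : ℝ → ℝ) (hη01 : ∀ t, η t = 0 ∨ η t = 1)
    (Ω : ℝ → ℝ)
    (hode : ∀ t, 0 ≤ t → HasDerivAt Ω (2 * A * Ω t + Q - η t * G * (Ω t) ^ 2) t)
    (h0 : Ω 0 ∈ Set.Ioo (Q / (-A + Real.sqrt (A ^ 2 + Q * G))) (-Q / (2 * A))) :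
    ∀ t, 0 ≤ t →
      Ω t ∈ Set.Ioo (Q / (-A + Real.sqrt (A ^ 2 + Q * G))) (-Q / (2 * A)) := by
  set a := Q / (-A + √(A ^ 2 + Q * G))
  set b := -Q / (2 * A)
  have ha : G * a ^ 2 = 2 * A * a + Q := observed_steady_state_riccati_eq hA hG hQ.le
  have ha0 : 0 ≤ a := div_nonneg hQ.le (by linarith [sqrt_nonneg (A ^ 2 + Q * G)])
  have hb : 2 * A * b + Q = 0 := by rw [mul_div_cancel₀ _ (by linarith)]; ring
  have hη : ∀ t, 0 ≤ η t ∧ η t ≤ 1 := fun t => by rcases hη01 t with h | h <;> simp [h]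
  have upper : ∀ t, 0 ≤ t → Ω t < b := fun t ht =>
    sub_neg.1 <| neg_of_hasDerivAt_le_mul_self (fun s hs => (hode s hs).sub_const b)
      (sub_neg.2 h0.2) (fun s _ _ => riccati_le_of_unobserved_steady_state hb hG (hη s).1) ht
  have lower : ∀ t, 0 ≤ t → a < Ω t := fun t ht =>
    sub_neg.1 <| neg_of_hasDerivAt_le_mul_self (K := 2 * A - G * (a + b))
      (fun s hs => (hode s hs).const_sub a) (sub_neg.2 h0.1) (fun s hs has => by
        linarith [riccati_ge_of_observed_steady_state (η := η s) ha ha0 hG (hη s).2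
          (sub_neg.1 has) (upper s hs)]) ht
  exact fun t ht => ⟨lower t ht, upper t ht⟩

/-- Positive invariance of (Ω_ss, Ω̄_ss) for the switched covariance dynamics, A < 0. -/
theorem switched_covariance_invariance_stable (A Q G : ℝ)
    (hA : A < 0) (hQ : 0 < Q) (hG : 0 ≤ G)
    (η : ℝ → ℝ) (hη : Measurable η) (hη01 : ∀ t, η t = 0 ∨ η t = 1)
    (Ω : ℝ → ℝ)
    (hode : ∀ t, 0 ≤ t → HasDerivAt Ω (2 * A * Ω t + Q - η t * G * (Ω t) ^ 2) t)
    (h0 : Ω 0 ∈ Set.Ioo (Q / (-A + Real.sqrt (A ^ 2 + Q * G))) (-Q / (2 * A))) :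
    ∀ t, 0 ≤ t →
      Ω t ∈ Set.Ioo (Q / (-A + Real.sqrt (A ^ 2 + Q * G))) (-Q / (2 * A)) :=
  switched_covariance_invariance_stable_general A Q G hA hQ hG η hη01 Ω hode h0
end

section
/- Let A > 0, Q > 0, G > 0 and let Ω solve Ω'(t) = 2AΩ(t) + Q − η(t)GΩ(t)² on [0,∞) for a measurable switching signal η : [0,∞) → {0,1}. If Ω(0) > Ω_ss = Q/(−A + √(A² + QG)), then Ω(t) > Ω_ss for all t ≥ 0. -/
/-!
The right-hand side is at least the Riccati field `2 A x + Q - G x²` (as `η ≤ 1`), which factors as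
`-(G x - A + s) (x - Ω_ss)` with `s = √(A² + Q G)`. On a compact time interval `Ω` is bounded
above, so while `Ω > Ω_ss` the gap `Ω - Ω_ss` satisfies a linear lower bound `u' ≥ -K u`, and such
a function cannot reach zero in finite time.
-/

open Set

theorem pos_of_neg_mul_self_le_deriv {f f' : ℝ → ℝ} {a b K : ℝ}
    (hf : ContinuousOn f (Icc a b)) (hf' : ∀ x ∈ Ico a b, HasDerivWithinAt f (f' x) (Ici x) x)
    (ha : 0 < f a) (bound : ∀ x ∈ Ico a b, 0 < f x → -K * f x ≤ f' x) :
    ∀ x ∈ Icc a b, 0 < f x := by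
  -- `f` cannot cross this barrier from above, since the barrier decays strictly faster.
  set barrier : ℝ → ℝ := fun x => f a * Real.exp (-(K + 1) * (x - a))
  have barrier_pos : ∀ x, 0 < barrier x := fun x => mul_pos ha (Real.exp_pos _)
  have barrier_deriv : ∀ x, HasDerivAt barrier (-(K + 1) * barrier x) x := fun x => by
    have := (((hasDerivAt_id' x).sub_const a).const_mul (-(K + 1))).exp.const_mul (f a)
    exact this.congr_deriv (by ring)
  intro x hx
  refine (barrier_pos x).trans_le <|
    image_le_of_deriv_right_lt_deriv_boundary' (f := barrier) (B := f)
      (fun y _ => (barrier_deriv y).continuousAt.continuousWithinAt)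
      (fun y _ => (barrier_deriv y).hasDerivWithinAt) (by simp [barrier]) hf hf' ?_ hx
  intro y hy hfy
  have := bound y hy (hfy ▸ barrier_pos y)
  rw [← hfy] at this
  linarith [barrier_pos y]

theorem riccati_eq_neg_mul {A Q G s : ℝ} (hs : s ^ 2 = A ^ 2 + Q * G) (hsA : s ≠ A) (x : ℝ) :
    2 * A * x + Q - G * x ^ 2 = -(G * x - A + s) * (x - Q / (-A + s)) := by
  have : -A + s ≠ 0 := by intro h; exact hsA (by linarith)
  field_simp
  linear_combination x * hs

theorem neg_mul_sub_le_switched_riccati {A Q G s η x M : ℝ} (hs : s ^ 2 = A ^ 2 + Q * G)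
    (hsA : A < s) (hG : 0 ≤ G) (hη : η ≤ 1) (hx : Q / (-A + s) ≤ x) (hxM : x ≤ M) :
    -(G * M - A + s) * (x - Q / (-A + s)) ≤ 2 * A * x + Q - η * G * x ^ 2 :=
  calc -(G * M - A + s) * (x - Q / (-A + s))
      ≤ -(G * x - A + s) * (x - Q / (-A + s)) := by
        nlinarith [mul_nonneg (mul_nonneg hG (sub_nonneg.2 hxM)) (sub_nonneg.2 hx)]
    _ = 2 * A * x + Q - G * x ^ 2 := (riccati_eq_neg_mul hs hsA.ne' x).symm
    _ ≤ 2 * A * x + Q - η * G * x ^ 2 := by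
        nlinarith [mul_nonneg (sub_nonneg.2 hη) (mul_nonneg hG (sq_nonneg x))]

theorem switched_covariance_invariance_unstable_general (A Q G : ℝ)
    (hQ : 0 < Q) (hG : 0 < G)
    (η : ℝ → ℝ) (hη01 : ∀ t, η t = 0 ∨ η t = 1)
    (Ω : ℝ → ℝ)
    (hode : ∀ t, 0 ≤ t → HasDerivAt Ω (2 * A * Ω t + Q - η t * G * (Ω t) ^ 2) t)
    (h0 : Q / (-A + Real.sqrt (A ^ 2 + Q * G)) < Ω 0) :
    ∀ t, 0 ≤ t → Q / (-A + Real.sqrt (A ^ 2 + Q * G)) < Ω t := by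
  intro T hT
  set s := Real.sqrt (A ^ 2 + Q * G)
  have hs : s ^ 2 = A ^ 2 + Q * G := Real.sq_sqrt (by positivity)
  have hsA : A < s := Real.lt_sqrt_of_sq_lt (by nlinarith [mul_pos hQ hG])
  have hη : ∀ t, η t ≤ 1 := fun t => (hη01 t).elim (fun h => h ▸ zero_le_one) le_of_eq
  have hcont : ContinuousOn Ω (Icc 0 T) := fun t ht => (hode t ht.1).continuousAt.continuousWithinAt
  obtain ⟨M, hM⟩ := isCompact_Icc.bddAbove_image hcont
  have gap_pos := pos_of_neg_mul_self_le_deriv (K := G * M - A + s)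
    (hcont.sub continuousOn_const) (fun t ht => ((hode t ht.1).sub_const _).hasDerivWithinAt)
    (sub_pos.2 h0)
    (fun t ht hgap => neg_mul_sub_le_switched_riccati hs hsA hG.le (hη t) (sub_pos.1 hgap).le
      (hM ⟨t, Ico_subset_Icc_self ht, rfl⟩))
    T ⟨hT, le_rfl⟩
  exact sub_pos.1 gap_pos

/-- Positive invariance of (Ω_ss, ∞) for the switched covariance dynamics, A > 0. -/
theorem switched_covariance_invariance_unstable (A Q G : ℝ)
    (hA : 0 < A) (hQ : 0 < Q) (hG : 0 < G)
    (η : ℝ → ℝ) (hη : Measurable η) (hη01 : ∀ t, η t = 0 ∨ η t = 1)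
    (Ω : ℝ → ℝ)
    (hode : ∀ t, 0 ≤ t → HasDerivAt Ω (2 * A * Ω t + Q - η t * G * (Ω t) ^ 2) t)
    (h0 : Q / (-A + Real.sqrt (A ^ 2 + Q * G)) < Ω 0) :
    ∀ t, 0 ≤ t → Q / (-A + Real.sqrt (A ^ 2 + Q * G)) < Ω t :=
  switched_covariance_invariance_unstable_general A Q G hQ hG η hη01 Ω hode h0
end

section
/- Let f : [0,∞) → ℝ be given by f(u) = −Ā(u)/(Ā(u) + B̄(u)) where Ā, B̄ are twice continuously differentiable with Ā(u) ≥ 0, B̄(u) > 0, Ā''(u) < 0, and B̄''(u) > 0 for all u ≥ 0, Ā(0) = 0, and f attains values strictly below 0 for some u. Then every stationary point of f is a local minimizer, and consequently f has at most one stationary point on (0,∞). -/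
/-!
Write `W = A B' - A' B` for the Wronskian of `A` and `B`. The quotient rule gives
`f' = W / (A + B)²`, so `f` is stationary exactly where `W` vanishes, and `f'` has the sign of `W`.
Since `W' = A B'' - A'' B > 0` on `(0, ∞)`, `W` is strictly increasing there: it has at most
one zero, and `f'` changes sign from `-` to `+` at that zero, which is therefore a local minimum.
-/

open Set Filter Topology

noncomputable def wronskian (A B : ℝ → ℝ) (x : ℝ) : ℝ :=
  A x * deriv B x - deriv A x * B x

section

variable {A B : ℝ → ℝ} {x : ℝ}

theorem hasDerivAt_neg_div_add (hA : DifferentiableAt ℝ A x) (hB : DifferentiableAt ℝ B x)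
    (hAB : A x + B x ≠ 0) :
    HasDerivAt (fun u => -A u / (A u + B u)) (wronskian A B x / (A x + B x) ^ 2) x := by
  refine (hA.hasDerivAt.neg.div (hA.hasDerivAt.add hB.hasDerivAt) hAB).congr_deriv ?_
  simp only [wronskian, Pi.add_apply, Pi.neg_apply]
  ring

theorem hasDerivAt_wronskian (hA : DifferentiableAt ℝ A x) (hB : DifferentiableAt ℝ B x)
    (hA' : DifferentiableAt ℝ (deriv A) x) (hB' : DifferentiableAt ℝ (deriv B) x) :
    HasDerivAt (wronskian A B)
      (A x * deriv (deriv B) x - deriv (deriv A) x * B x) x := by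
  refine ((hA.hasDerivAt.mul hB'.hasDerivAt).sub
    (hA'.hasDerivAt.mul hB.hasDerivAt)).congr_deriv ?_
  ring

theorem strictMonoOn_wronskian {s : Set ℝ} (hs : Convex ℝ s)
    (hA : ContDiff ℝ 2 A) (hB : ContDiff ℝ 2 B)
    (hpos : ∀ x ∈ interior s, deriv (deriv A) x * B x < A x * deriv (deriv B) x) :
    StrictMonoOn (wronskian A B) s := by
  have hA₁ := hA.differentiable two_ne_zero
  have hB₁ := hB.differentiable two_ne_zero
  have hA₂ := hA.differentiable_deriv_two
  have hB₂ := hB.differentiable_deriv_two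
  refine strictMonoOn_of_deriv_pos hs ?_ fun x hx => ?_
  · exact fun x _ =>
      (hasDerivAt_wronskian (hA₁ x) (hB₁ x) (hA₂ x) (hB₂ x)).continuousAt.continuousWithinAt
  · rw [(hasDerivAt_wronskian (hA₁ x) (hB₁ x) (hA₂ x) (hB₂ x)).deriv]
    linarith [hpos x hx]

end

theorem isLocalMin_of_hasDerivAt_div_of_strictMonoOn {f φ ψ : ℝ → ℝ} {s : Set ℝ} {u : ℝ}
    (hs : s ∈ 𝓝 u) (hf : ∀ x ∈ s, HasDerivAt f (φ x / ψ x) x) (hψ : ∀ x ∈ s, 0 < ψ x)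
    (hφ : StrictMonoOn φ s) (hu : φ u = 0) : IsLocalMin f u := by
  have hus : u ∈ s := mem_of_mem_nhds hs
  refine isLocalMin_of_deriv (hf u hus).continuousAt ?_ ?_ ?_
  · filter_upwards [nhdsWithin_le_nhds hs] with x hx using (hf x hx).differentiableAt
  · filter_upwards [nhdsWithin_le_nhds hs, self_mem_nhdsWithin] with x hx hxu
    rw [(hf x hx).deriv]
    exact div_nonpos_of_nonpos_of_nonneg (hu ▸ (hφ hx hus hxu).le) (hψ x hx).le
  · filter_upwards [nhdsWithin_le_nhds hs, self_mem_nhdsWithin] with x hx hux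
    rw [(hf x hx).deriv]
    exact div_nonneg (hu ▸ (hφ hus hx hux).le) (hψ x hx).le

theorem stationary_points_are_local_minima_general
    (Abar Bbar : ℝ → ℝ)
    (hA : ContDiff ℝ 2 Abar) (hB : ContDiff ℝ 2 Bbar)
    (hAnn : ∀ u, 0 ≤ u → 0 ≤ Abar u)
    (hBpos : ∀ u, 0 ≤ u → 0 < Bbar u)
    (hA'' : ∀ u, 0 ≤ u → deriv (deriv Abar) u < 0)
    (hB'' : ∀ u, 0 ≤ u → 0 < deriv (deriv Bbar) u)
    (f : ℝ → ℝ) (hf : ∀ u, f u = -Abar u / (Abar u + Bbar u)) :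
    (∀ u, 0 < u → deriv f u = 0 → IsLocalMin f u) ∧
    (∀ u v, 0 < u → 0 < v → deriv f u = 0 → deriv f v = 0 → u = v) := by
  have hsum : ∀ x, 0 < x → 0 < Abar x + Bbar x := fun x hx => by
    linarith [hAnn x hx.le, hBpos x hx.le]
  have hderiv : ∀ x ∈ Ioi (0 : ℝ),
      HasDerivAt f (wronskian Abar Bbar x / (Abar x + Bbar x) ^ 2) x :=
    fun x hx => funext hf ▸ hasDerivAt_neg_div_add (hA.differentiable two_ne_zero x)
      (hB.differentiable two_ne_zero x) (hsum x hx).ne'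
  have hW : StrictMonoOn (wronskian Abar Bbar) (Ioi 0) :=
    strictMonoOn_wronskian (convex_Ioi 0) hA hB fun x hx => by
      rw [interior_Ioi] at hx
      nlinarith [hAnn x hx.le, hBpos x hx.le, hA'' x hx.le, hB'' x hx.le]
  have hstat : ∀ x, 0 < x → deriv f x = 0 → wronskian Abar Bbar x = 0 := fun x hx h0 => by
    rw [(hderiv x hx).deriv, div_eq_zero_iff] at h0
    exact h0.resolve_right (pow_pos (hsum x hx) 2).ne'
  refine ⟨fun u hu h0 => ?_, fun u v hu hv h0u h0v => ?_⟩
  · exact isLocalMin_of_hasDerivAt_div_of_strictMonoOn (Ioi_mem_nhds hu) hderiv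
      (fun x hx => pow_pos (hsum x hx) 2) hW (hstat u hu h0)
  · exact hW.injOn hu hv ((hstat u hu h0u).trans (hstat v hv h0v).symm)

/-- Abstract unimodality structure: with Ā concave, B̄ convex, Ā ≥ 0, B̄ > 0 on [0,∞),
Ā(0) = 0 and f = −Ā/(Ā+B̄) attaining strictly negative values, every stationary point
of f in (0,∞) is a local minimizer, hence f has at most one stationary point there. -/
theorem stationary_points_are_local_minima
    (Abar Bbar : ℝ → ℝ)
    (hA : ContDiff ℝ 2 Abar) (hB : ContDiff ℝ 2 Bbar)
    (hA0 : Abar 0 = 0)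
    (hAnn : ∀ u, 0 ≤ u → 0 ≤ Abar u)
    (hBpos : ∀ u, 0 ≤ u → 0 < Bbar u)
    (hA'' : ∀ u, 0 ≤ u → deriv (deriv Abar) u < 0)
    (hB'' : ∀ u, 0 ≤ u → 0 < deriv (deriv Bbar) u)
    (f : ℝ → ℝ) (hf : ∀ u, f u = -Abar u / (Abar u + Bbar u))
    (hneg : ∃ u, 0 ≤ u ∧ f u < 0) :
    (∀ u, 0 < u → deriv f u = 0 → IsLocalMin f u) ∧
    (∀ u v, 0 < u → 0 < v → deriv f u = 0 → deriv f v = 0 → u = v) :=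
  stationary_points_are_local_minima_general Abar Bbar hA hB hAnn hBpos hA'' hB'' f hf
end
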